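/- Let v : Fin 5 → ℂ be nonzero with ∑ i, v i = 0 and ∑ i, (v i)² = 0 (a point of the quadric Q ≅ ℙ¹ × ℙ¹). If the orbit {g • v : g ∈ G₂₀} contains no 8 pairwise non-proportional vectors (i.e. the projective G₂₀-orbit of the point [v] has fewer than 8 elements), then either v is a nonzero scalar multiple of P_k for some k ∈ {1,2,3,4}, or v is a nonzero scalar multiple of c^j • R_m for some j ∈ {0,…,4} and m ∈ {2,3}. (The only G₂₀-orbits of length < 8 on Q are the length-4 orbit {P_k} and the two length-5 orbits {c^j • R₂} and {c^j • R₃}.) -/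
import Mathlib

set_option maxRecDepth 8000


/-- The 5-cycle `(0 1 2 3 4)` on `Fin 5`, sending `i` to `i + 1 (mod 5)`. -/
def c : Equiv.Perm (Fin 5) := finRotate 5

/-- The 4-cycle `(1 2 4 3)` on `Fin 5`, fixing `0`. -/
def d : Equiv.Perm (Fin 5) := ([1, 2, 4, 3] : List (Fin 5)).formPerm

/-- The group `G₂₀ ≅ C₅ ⋊ C₄` generated by `c` and `d`. -/
def G₂₀ : Subgroup (Equiv.Perm (Fin 5)) := Subgroup.closure {c, d}

/-- The linear action of a permutation `g` on vectors: `(g • v) i = v (g⁻¹ i)`. -/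
def permSMul (g : Equiv.Perm (Fin 5)) (v : Fin 5 → ℂ) : Fin 5 → ℂ := fun i => v (g⁻¹ i)

/-- The point `P_k`, `P_k i = ζ ^ (k * i)`. -/
def P (ζ : ℂ) (k : ℕ) : Fin 5 → ℂ := fun i => ζ ^ (k * (i : ℕ))

def R₂ : Fin 5 → ℂ := ![0, -Complex.I, -1, 1, Complex.I]
def R₃ : Fin 5 → ℂ := ![0, Complex.I, -1, 1, -Complex.I]

lemma permSMul_mul (g h : Equiv.Perm (Fin 5)) (v : Fin 5 → ℂ) :
    permSMul (g * h) v = permSMul g (permSMul h v) := by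
  funext i; simp [permSMul, mul_inv_rev, Equiv.Perm.mul_apply]

lemma permSMul_one (v : Fin 5 → ℂ) : permSMul 1 v = v := rfl

lemma permSMul_smul (g : Equiv.Perm (Fin 5)) (t : ℂ) (v : Fin 5 → ℂ) :
    permSMul g (t • v) = t • permSMul g v := rfl

lemma pow_mod5 {ζ : ℂ} (hz5 : ζ ^ 5 = 1) (a : ℕ) : ζ ^ a = ζ ^ (a % 5) := by
  conv_lhs => rw [← Nat.mod_add_div a 5]
  rw [pow_add, pow_mul, hz5, one_pow, mul_one]

/-- The pure-`c` eigenvector case: `v` is proportional to some `P ζ k`. -/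
lemma c_case (ζ : ℂ) (hζ : IsPrimitiveRoot ζ 5) (v : Fin 5 → ℂ) (hv : v ≠ 0)
    (h1 : (∑ i, v i) = 0) (k : ℕ) (hk1 : 1 ≤ k) (hk5 : k < 5) (lam : ℂ)
    (heig : permSMul (c ^ k) v = lam • v) :
    ∃ k' ∈ Finset.Icc 1 4, ∃ μ : ℂ, μ ≠ 0 ∧ v = μ • P ζ k' := by
  have hpow : ∀ m : ℕ, permSMul ((c ^ k) ^ m) v = lam ^ m • v := by
    intro m
    induction m with
    | zero => simp [permSMul_one]
    | succ n ih =>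
      rw [pow_succ, permSMul_mul, heig, permSMul_smul, ih, smul_smul, ← pow_succ']
  have hC : ∃ μ : ℂ, permSMul c v = μ • v := by
    interval_cases k
    · exact ⟨lam, by simpa using heig⟩
    · refine ⟨lam ^ 3, ?_⟩
      have := hpow 3
      rwa [show ((c ^ 2) ^ 3 : Equiv.Perm (Fin 5)) = c from by decide] at this
    · refine ⟨lam ^ 2, ?_⟩
      have := hpow 2
      rwa [show ((c ^ 3) ^ 2 : Equiv.Perm (Fin 5)) = c from by decide] at this
    · refine ⟨lam ^ 4, ?_⟩
      have := hpow 4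
      rwa [show ((c ^ 4) ^ 4 : Equiv.Perm (Fin 5)) = c from by decide] at this
  obtain ⟨μ, hC⟩ := hC
  have E0 : v 4 = μ * v 0 := by
    have h := congrFun hC 0
    simpa [permSMul, show (c⁻¹ : Equiv.Perm (Fin 5)) 0 = 4 from by decide] using h
  have E1 : v 0 = μ * v 1 := by
    have h := congrFun hC 1
    simpa [permSMul, show (c⁻¹ : Equiv.Perm (Fin 5)) 1 = 0 from by decide] using h
  have E2 : v 1 = μ * v 2 := by
    have h := congrFun hC 2
    simpa [permSMul, show (c⁻¹ : Equiv.Perm (Fin 5)) 2 = 1 from by decide] using h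
  have E3 : v 2 = μ * v 3 := by
    have h := congrFun hC 3
    simpa [permSMul, show (c⁻¹ : Equiv.Perm (Fin 5)) 3 = 2 from by decide] using h
  have E4 : v 3 = μ * v 4 := by
    have h := congrFun hC 4
    simpa [permSMul, show (c⁻¹ : Equiv.Perm (Fin 5)) 4 = 3 from by decide] using h
  have hμ0 : μ ≠ 0 := by
    rintro rfl
    simp only [zero_mul] at E0 E1 E2 E3 E4
    exact hv (by funext i; fin_cases i <;> assumption)
  have hv0 : v 0 ≠ 0 := by
    intro h0
    have hv1 : v 1 = 0 := by
      have := E1; rw [h0] at this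
      exact ((mul_eq_zero.mp this.symm).resolve_left hμ0)
    have hv2 : v 2 = 0 := by
      have := E2; rw [hv1] at this
      exact ((mul_eq_zero.mp this.symm).resolve_left hμ0)
    have hv3 : v 3 = 0 := by
      have := E3; rw [hv2] at this
      exact ((mul_eq_zero.mp this.symm).resolve_left hμ0)
    have hv4 : v 4 = 0 := by
      have := E4; rw [hv3] at this
      exact ((mul_eq_zero.mp this.symm).resolve_left hμ0)
    exact hv (by funext i; fin_cases i <;> assumption)
  have hμ5 : μ ^ 5 = 1 := by
    have hc0 : v 0 = μ ^ 5 * v 0 := by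
      linear_combination E1 + μ * E2 + μ ^ 2 * E3 + μ ^ 3 * E4 + μ ^ 4 * E0
    have h5 : (μ ^ 5 - 1) * v 0 = 0 := by linear_combination -hc0
    rcases mul_eq_zero.mp h5 with h | h
    · linear_combination h
    · exact absurd h hv0
  have h1' : v 0 + v 1 + v 2 + v 3 + v 4 = 0 := by
    rw [← h1, Fin.sum_univ_five]
  have hμ1 : μ ≠ 1 := by
    rintro rfl
    simp only [one_mul] at E0 E1 E2 E3 E4
    exact hv0 (by linear_combination (h1' + 4 * E1 + 3 * E2 + 2 * E3 + E4) / 5)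
  obtain ⟨k2, hk2lt, hk2eq⟩ := hζ.eq_pow_of_pow_eq_one hμ5
  have hk2ne : k2 ≠ 0 := by rintro rfl; exact hμ1 (by simpa using hk2eq.symm)
  have hz5 : ζ ^ 5 = 1 := hζ.pow_eq_one
  have hv4' : v 4 = μ ^ 1 * v 0 := by rw [E0]; ring
  have hv3' : v 3 = μ ^ 2 * v 0 := by rw [E4, E0]; ring
  have hv2' : v 2 = μ ^ 3 * v 0 := by rw [E3, E4, E0]; ring
  have hv1' : v 1 = μ ^ 4 * v 0 := by rw [E2, E3, E4, E0]; ring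
  refine ⟨5 - k2, Finset.mem_Icc.mpr ⟨by omega, by omega⟩, v 0, hv0, ?_⟩
  have key1 : μ ^ 4 * v 0 = v 0 * ζ ^ ((5 - k2) * 1) := by
    rw [← hk2eq, ← pow_mul, pow_mod5 hz5 (k2 * 4), pow_mod5 hz5 ((5 - k2) * 1),
      show k2 * 4 % 5 = (5 - k2) * 1 % 5 from by omega]
    ring
  have key2 : μ ^ 3 * v 0 = v 0 * ζ ^ ((5 - k2) * 2) := by
    rw [← hk2eq, ← pow_mul, pow_mod5 hz5 (k2 * 3), pow_mod5 hz5 ((5 - k2) * 2),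
      show k2 * 3 % 5 = (5 - k2) * 2 % 5 from by omega]
    ring
  have key3 : μ ^ 2 * v 0 = v 0 * ζ ^ ((5 - k2) * 3) := by
    rw [← hk2eq, ← pow_mul, pow_mod5 hz5 (k2 * 2), pow_mod5 hz5 ((5 - k2) * 3),
      show k2 * 2 % 5 = (5 - k2) * 3 % 5 from by omega]
    ring
  have key4 : μ ^ 1 * v 0 = v 0 * ζ ^ ((5 - k2) * 4) := by
    rw [← hk2eq, ← pow_mul, pow_mod5 hz5 (k2 * 1), pow_mod5 hz5 ((5 - k2) * 4),
      show k2 * 1 % 5 = (5 - k2) * 4 % 5 from by omega]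
    ring
  funext i
  fin_cases i
  · simp [P, Pi.smul_apply]
  · simpa [P, Pi.smul_apply, hv1'] using key1
  · simpa [P, Pi.smul_apply, hv2'] using key2
  · simpa [P, Pi.smul_apply, hv3'] using key3
  · simpa [P, Pi.smul_apply, hv4'] using key4


/-- The `c^s * d` eigenvector case: `v` is proportional to some `c^j • R₂` or `c^j • R₃`. -/
lemma d_case (v : Fin 5 → ℂ) (hv : v ≠ 0)
    (h1 : (∑ i, v i) = 0) (h2 : (∑ i, (v i) ^ 2) = 0) (s : ℕ) (hs : s < 5) (lam : ℂ)
    (heig : permSMul (c ^ s * d) v = lam • v) :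
    ∃ j : Fin 5, ∃ μ : ℂ, μ ≠ 0 ∧
      (v = μ • permSMul (c ^ (j : ℕ)) R₂ ∨ v = μ • permSMul (c ^ (j : ℕ)) R₃) := by
  have hconj : d * c ^ s = c ^ s * (c ^ s * d) := by interval_cases s <;> decide
  set u : Fin 5 → ℂ := permSMul (c ^ s) v with hu_def
  have hueig : permSMul d u = lam • u := by
    rw [hu_def, ← permSMul_mul, hconj, permSMul_mul, heig, permSMul_smul]
  have hvu : ∀ i, v i = u ((c ^ s) i) := by
    intro i; simp [hu_def, permSMul]
  have hune : u ≠ 0 := by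
    intro h
    apply hv; funext i
    rw [hvu i, h]; rfl
  have F0 : u 0 = lam * u 0 := by
    have h := congrFun hueig 0
    simpa [permSMul, show (d⁻¹ : Equiv.Perm (Fin 5)) 0 = 0 from by decide] using h
  have F1 : u 3 = lam * u 1 := by
    have h := congrFun hueig 1
    simpa [permSMul, show (d⁻¹ : Equiv.Perm (Fin 5)) 1 = 3 from by decide] using h
  have F2 : u 1 = lam * u 2 := by
    have h := congrFun hueig 2
    simpa [permSMul, show (d⁻¹ : Equiv.Perm (Fin 5)) 2 = 1 from by decide] using h
  have F3 : u 4 = lam * u 3 := by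
    have h := congrFun hueig 3
    simpa [permSMul, show (d⁻¹ : Equiv.Perm (Fin 5)) 3 = 4 from by decide] using h
  have F4 : u 2 = lam * u 4 := by
    have h := congrFun hueig 4
    simpa [permSMul, show (d⁻¹ : Equiv.Perm (Fin 5)) 4 = 2 from by decide] using h
  have hsu1 : u 0 + u 1 + u 2 + u 3 + u 4 = 0 := by
    rw [← Fin.sum_univ_five (f := u)]
    rw [show (∑ i, u i) = ∑ i, v (((c ^ s)⁻¹ : Equiv.Perm (Fin 5)) i) from rfl]
    rw [Equiv.sum_comp ((c ^ s)⁻¹ : Equiv.Perm (Fin 5)) v]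
    exact h1
  have hsu2 : u 0 ^ 2 + u 1 ^ 2 + u 2 ^ 2 + u 3 ^ 2 + u 4 ^ 2 = 0 := by
    rw [← Fin.sum_univ_five (f := fun i => u i ^ 2)]
    rw [show (∑ i, u i ^ 2) = ∑ i, (fun x => v x ^ 2) (((c ^ s)⁻¹ : Equiv.Perm (Fin 5)) i)
      from rfl]
    rw [Equiv.sum_comp ((c ^ s)⁻¹ : Equiv.Perm (Fin 5)) (fun x => v x ^ 2)]
    exact h2
  have hlamne : lam ≠ 0 := by
    rintro rfl
    simp only [zero_mul] at F0 F1 F2 F3 F4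
    exact hune (by funext i; fin_cases i <;> assumption)
  have hu1 : u 1 ≠ 0 := by
    intro h
    have h2' : u 2 = 0 := by
      have := F2; rw [h] at this
      exact ((mul_eq_zero.mp this.symm).resolve_left hlamne)
    have h3' : u 3 = 0 := by rw [F1, h, mul_zero]
    have h4' : u 4 = 0 := by rw [F3, h3', mul_zero]
    have h0' : u 0 = 0 := by
      rw [h, h2', h3', h4'] at hsu1; linear_combination hsu1
    exact hune (by funext i; fin_cases i <;> assumption)
  have hlam4 : lam ^ 4 = 1 := by
    have hc : u 1 = lam ^ 4 * u 1 := by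
      linear_combination F2 + lam * F4 + lam ^ 2 * F3 + lam ^ 3 * F1
    have h' : (lam ^ 4 - 1) * u 1 = 0 := by linear_combination -hc
    rcases mul_eq_zero.mp h' with h | h
    · linear_combination h
    · exact absurd h hu1
  have hquad : lam = 1 ∨ lam = -1 ∨ lam = Complex.I ∨ lam = -Complex.I := by
    have hq : (lam ^ 2 - 1) * (lam ^ 2 + 1) = 0 := by linear_combination hlam4
    rcases mul_eq_zero.mp hq with h | h
    · have hq2 : (lam - 1) * (lam + 1) = 0 := by linear_combination h
      rcases mul_eq_zero.mp hq2 with h' | h'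
      · exact Or.inl (by linear_combination h')
      · exact Or.inr (Or.inl (by linear_combination h'))
    · have hq2 : (lam - Complex.I) * (lam + Complex.I) = 0 := by
        linear_combination h - Complex.I_sq
      rcases mul_eq_zero.mp hq2 with h' | h'
      · exact Or.inr (Or.inr (Or.inl (by linear_combination h')))
      · exact Or.inr (Or.inr (Or.inr (by linear_combination h')))
  have hinv : ((c ^ s)⁻¹ : Equiv.Perm (Fin 5)) = c ^ ((5 - s) % 5) := by
    interval_cases s <;> decide
  have hvju : v = permSMul (c ^ ((5 - s) % 5)) u := by
    rw [← hinv, hu_def, ← permSMul_mul, inv_mul_cancel, permSMul_one]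
  rcases hquad with rfl | rfl | rfl | rfl
  · -- lam = 1 : contradiction
    exfalso
    have hu2' : u 2 = u 1 := by linear_combination -F2
    have hu3' : u 3 = u 1 := by linear_combination F1
    have hu4' : u 4 = u 1 := by linear_combination F3 + F1
    have hu0' : u 0 = -(4 * u 1) := by
      linear_combination hsu1 - hu2' - hu3' - hu4'
    have h20 : (20 : ℂ) * u 1 ^ 2 = 0 := by
      linear_combination hsu2 - (u 0 - 4 * u 1) * hu0' - (u 2 + u 1) * hu2'
        - (u 3 + u 1) * hu3' - (u 4 + u 1) * hu4'
    exact hu1 (by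
      have : u 1 ^ 2 = 0 := by linear_combination h20 / 20
      exact pow_eq_zero_iff (by norm_num) |>.mp this)
  · -- lam = -1 : contradiction
    exfalso
    have hu0' : u 0 = 0 := by linear_combination F0 / 2
    have hu2' : u 2 = -u 1 := by linear_combination F2
    have hu3' : u 3 = -u 1 := by linear_combination F1
    have hu4' : u 4 = u 1 := by linear_combination F3 - hu3'
    have h4' : (4 : ℂ) * u 1 ^ 2 = 0 := by
      linear_combination hsu2 - u 0 * hu0' - (u 2 - u 1) * hu2'
        - (u 3 - u 1) * hu3' - (u 4 + u 1) * hu4'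
    exact hu1 (by
      have : u 1 ^ 2 = 0 := by linear_combination h4' / 4
      exact pow_eq_zero_iff (by norm_num) |>.mp this)
  · -- lam = I : v ∝ c^j • R₂
    have hu0' : u 0 = 0 := by
      have h' : (1 - Complex.I) * u 0 = 0 := by linear_combination F0
      rcases mul_eq_zero.mp h' with h'' | h''
      · exfalso
        have hI : Complex.I = 1 := by linear_combination -h''
        have := congrArg Complex.im hI
        simp at this
      · exact h''
    have hu2' : u 2 = -Complex.I * u 1 := by
      linear_combination Complex.I * F2 + u 2 * Complex.I_sq
    have hu3' : u 3 = Complex.I * u 1 := F1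
    have hu4' : u 4 = -u 1 := by
      linear_combination F3 + Complex.I * hu3' + u 1 * Complex.I_sq
    have hueq : u = (Complex.I * u 1) • R₂ := by
      funext i
      fin_cases i <;> simp [R₂]
      · exact hu0'
      · linear_combination u 1 * Complex.I_sq
      · linear_combination hu2'
      · linear_combination hu3'
      · linear_combination hu4' - u 1 * Complex.I_sq
    refine ⟨⟨(5 - s) % 5, by omega⟩, Complex.I * u 1,
      mul_ne_zero Complex.I_ne_zero hu1, Or.inl ?_⟩
    conv_lhs => rw [hvju, hueq, permSMul_smul]
  · -- lam = -I : v ∝ c^j • R₃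
    have hu0' : u 0 = 0 := by
      have h' : (1 + Complex.I) * u 0 = 0 := by linear_combination F0
      rcases mul_eq_zero.mp h' with h'' | h''
      · exfalso
        have : Complex.I = -1 := by linear_combination h''
        have := congrArg Complex.im this
        simp at this
      · exact h''
    have hu2' : u 2 = Complex.I * u 1 := by
      linear_combination -Complex.I * F2 + u 2 * Complex.I_sq
    have hu3' : u 3 = -Complex.I * u 1 := F1
    have hu4' : u 4 = -u 1 := by
      linear_combination F3 - Complex.I * hu3' + u 1 * Complex.I_sq
    have hueq : u = (-Complex.I * u 1) • R₃ := by
      funext i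
      fin_cases i <;> simp [R₃]
      · exact hu0'
      · linear_combination u 1 * Complex.I_sq
      · linear_combination hu2'
      · linear_combination hu3'
      · linear_combination hu4' - u 1 * Complex.I_sq
    refine ⟨⟨(5 - s) % 5, by omega⟩, -Complex.I * u 1,
      mul_ne_zero (neg_ne_zero.mpr Complex.I_ne_zero) hu1, Or.inr ?_⟩
    conv_lhs => rw [hvju, hueq, permSMul_smul]

def g8 : Fin 8 → Equiv.Perm (Fin 5) := ![1, c, c ^ 2, c ^ 3, c ^ 4, d, c * d, c ^ 2 * d]

lemma g8_mem : ∀ a, g8 a ∈ G₂₀ := by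
  have hc : c ∈ G₂₀ := Subgroup.subset_closure (by simp)
  have hd : d ∈ G₂₀ := Subgroup.subset_closure (by simp)
  intro a
  fin_cases a
  · exact one_mem _
  · exact hc
  · exact pow_mem hc 2
  · exact pow_mem hc 3
  · exact pow_mem hc 4
  · exact hd
  · exact mul_mem hc hd
  · exact mul_mem (pow_mem hc 2) hd

lemma g8_pred : ∀ a b : Fin 8, a ≠ b →
    ((∃ k < 5, 1 ≤ k ∧ (g8 b)⁻¹ * g8 a = c ^ k) ∨
     (∃ s < 5, (g8 b)⁻¹ * g8 a = c ^ s * d) ∨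
     (∃ s < 5, ((g8 b)⁻¹ * g8 a)⁻¹ = c ^ s * d)) := by decide

theorem stmt14 (ζ : ℂ) (hζ : IsPrimitiveRoot ζ 5) (v : Fin 5 → ℂ) (hv : v ≠ 0)
    (h1 : (∑ i, v i) = 0) (h2 : (∑ i, (v i) ^ 2) = 0)
    (hsmall : ¬ ∃ w : Fin 8 → Fin 5 → ℂ,
      (∀ a, ∃ g ∈ G₂₀, w a = permSMul g v) ∧
      (∀ a b, a ≠ b → ¬ ∃ lam : ℂ, w a = lam • w b)) :
    (∃ k ∈ Finset.Icc 1 4, ∃ μ : ℂ, μ ≠ 0 ∧ v = μ • P ζ k) ∨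
    (∃ j : Fin 5, ∃ μ : ℂ, μ ≠ 0 ∧
      (v = μ • permSMul (c ^ (j : ℕ)) R₂ ∨ v = μ • permSMul (c ^ (j : ℕ)) R₃)) := by
  have key : ∃ a b : Fin 8, a ≠ b ∧ ∃ lam : ℂ,
      permSMul (g8 a) v = lam • permSMul (g8 b) v := by
    by_contra hcon
    push_neg at hcon
    apply hsmall
    refine ⟨fun a => permSMul (g8 a) v, fun a => ⟨g8 a, g8_mem a, rfl⟩, ?_⟩
    rintro a b hab ⟨lam, h⟩
    exact hcon a b hab lam h
  obtain ⟨a, b, hab, lam, heq⟩ := key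
  have heig : permSMul ((g8 b)⁻¹ * g8 a) v = lam • v := by
    rw [permSMul_mul, heq, permSMul_smul, ← permSMul_mul, inv_mul_cancel, permSMul_one]
  rcases g8_pred a b hab with ⟨k, hk5, hk1, hkey⟩ | ⟨s, hs, hkey⟩ | ⟨s, hs, hkey⟩
  · rw [hkey] at heig
    exact Or.inl (c_case ζ hζ v hv h1 k hk1 hk5 lam heig)
  · rw [hkey] at heig
    exact Or.inr (d_case v hv h1 h2 s hs lam heig)
  · have hlam0 : lam ≠ 0 := by
      rintro rfl
      rw [zero_smul] at heig
      apply hv; funext i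
      have := congrFun heig (((g8 b)⁻¹ * g8 a) i)
      simpa [permSMul] using this
    have heig2 : permSMul (c ^ s * d) v = lam⁻¹ • v := by
      rw [← hkey]
      have h0 := congrArg (permSMul ((g8 b)⁻¹ * g8 a)⁻¹) heig
      rw [← permSMul_mul, inv_mul_cancel, permSMul_one, permSMul_smul] at h0
      rw [eq_comm, inv_smul_eq_iff₀ hlam0]
      exact h0
    exact Or.inr (d_case v hv h1 h2 s hs lam⁻¹ heig2)
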